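/- (Wire-tap channel coding theorem with universal₂ hashing.) Let X, Y, Z be finite sets, let W^B: X → (probability distributions on Y) be the main channel and W^E: X → (probability distributions on Z) the wire-tapper's channel. Then for all positive integers L, M and every probability distribution p on X, there exists a code Φ = (M, {Q_1,…,Q_M}, {D_1,…,D_M}), where each Q_i is a probability distribution on X and D_1,…,D_M are pairwise disjoint subsets of Y, such that |Φ| = M, the average error probability satisfies ε_B(Φ) := (1/M) Σ_{i=1}^M Σ_{x∈X} Q_i(x) W^B_x(Y∖D_i) ≤ 2 min_{0≤t≤1} (ML)^t e^{φ(−t|W^B,p)}, and Eve's distinguishability satisfies d₁(Φ|E) := Σ_{i=1}^M Σ_{z∈Z} | (1/M) W^E_{Q_i}(z) − (1/M) W^E_Φ(z) | ≤ 6 min_{0≤t≤1/2} e^{φ(t|W^E,p)} / L^t. -/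

import Mathlib

/-!
Random coding with binning. The codebook `c : Fin M × Fin L → X` has i.i.d. entries of law `p`;
message `i` is sent as a uniformly random codeword of bin `i`, and Bob decodes to the bin of the
maximum-likelihood codeword. Gallager's argument bounds Bob's expected error by
`(ML)^t e^{φ(-t|W^B,p)}`. For Eve, the deviation of the output law of message `i` from the average
is `∑ k, γ_ik W^E(c k)` with `∑ k, γ_ik = 0`, `∑ k, |γ_ik| ≤ 2` and `∑ k, γ_ik² ≤ 1/L`; cutting
`W^E` at a suitable height, the bounded part is controlled by its variance and the tail by its
mean, which gives `3 e^{φ(t|W^E,p)} / L^t` in expectation. By Markov's inequality each bound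
exceeds twice its mean with probability `< 1/2`, so some codebook satisfies both.
-/

open Finset

/-- Gallager's trick: with `s = 1 / (1 + t)`, `a = a ^ s * (a ^ s) ^ t ≤ a ^ s * (b ^ s) ^ t`. -/
lemma le_rpow_inv_one_add_mul_rpow {a b S t : ℝ} (ha : 0 ≤ a) (hab : a ≤ b) (ht : 0 ≤ t)
    (hbS : b ^ (1 / (1 + t)) ≤ S) : a ≤ a ^ (1 / (1 + t)) * S ^ t := by
  have hs : 0 < 1 / (1 + t) := by positivity
  rcases ha.eq_or_lt with rfl | ha
  · rw [Real.zero_rpow hs.ne']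
    simp
  calc a = a ^ (1 / (1 + t)) * (a ^ (1 / (1 + t))) ^ t := by
        rw [← Real.rpow_mul ha.le, ← Real.rpow_add ha]
        rw [show 1 / (1 + t) + 1 / (1 + t) * t = 1 by field_simp, Real.rpow_one]
    _ ≤ a ^ (1 / (1 + t)) * S ^ t := by
        gcongr
        exact (Real.rpow_le_rpow ha.le hab hs.le).trans hbS

lemma sq_le_rpow_two_sub_mul_rpow {w τ r : ℝ} (hw : 0 ≤ w) (hwτ : w ≤ τ) (hr : r ≤ 2) :
    w ^ 2 ≤ τ ^ (2 - r) * w ^ r := by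
  rcases hw.eq_or_lt with rfl | hw
  · rw [zero_pow two_ne_zero]
    exact mul_nonneg (Real.rpow_nonneg hwτ _) (Real.rpow_nonneg le_rfl _)
  calc w ^ 2 = w ^ (2 - r) * w ^ r := by
        rw [← Real.rpow_add hw, sub_add_cancel, Real.rpow_two]
    _ ≤ τ ^ (2 - r) * w ^ r := by gcongr

lemma le_rpow_one_sub_mul_rpow {w τ r : ℝ} (hτ : 0 < τ) (hτw : τ < w) (hr : 1 ≤ r) :
    w ≤ τ ^ (1 - r) * w ^ r := by
  have hw : 0 < w := hτ.trans hτw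
  calc w = w ^ (1 - r) * w ^ r := by rw [← Real.rpow_add hw, sub_add_cancel, Real.rpow_one]
    _ ≤ τ ^ (1 - r) * w ^ r := mul_le_mul_of_nonneg_right
        (Real.rpow_le_rpow_of_nonpos hτ hτw.le (by linarith)) (Real.rpow_nonneg hw.le _)

/-- The height `τ = (m * l) ^ (1 - t)` satisfies `τ ^ r = m * l` for `r = 1 / (1 - t)`; this
balances the two terms of the truncation bound, each of which equals `m ^ (1 - t) / l ^ t`. -/
lemma sqrt_add_two_mul_truncation_eq {m l t : ℝ} (hm : 0 < m) (hl : 0 < l) (ht : t < 1) :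
    √(l⁻¹ * (((m * l) ^ (1 - t)) ^ (2 - 1 / (1 - t)) * m))
      + 2 * (((m * l) ^ (1 - t)) ^ (1 - 1 / (1 - t)) * m) = 3 * (m ^ (1 - t) / l ^ t) := by
  have ht' : 1 - t ≠ 0 := by linarith
  have hτ : 0 < (m * l) ^ (1 - t) := by positivity
  have hτr : ((m * l) ^ (1 - t)) ^ (1 / (1 - t)) = m * l := by
    rw [← Real.rpow_mul (by positivity), mul_one_div_cancel ht', Real.rpow_one]
  have htail : ((m * l) ^ (1 - t)) ^ (1 - 1 / (1 - t)) * m = m ^ (1 - t) / l ^ t := by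
    rw [← Real.rpow_mul (by positivity), show (1 - t) * (1 - 1 / (1 - t)) = -t by field_simp; ring,
      Real.mul_rpow hm.le hl.le, Real.rpow_neg hm.le, Real.rpow_neg hl.le, Real.rpow_sub hm,
      Real.rpow_one]
    field_simp
  have hvar : l⁻¹ * (((m * l) ^ (1 - t)) ^ (2 - 1 / (1 - t)) * m)
      = (((m * l) ^ (1 - t)) ^ (1 - 1 / (1 - t)) * m) ^ 2 := by
    rw [show 2 - 1 / (1 - t) = 1 / (1 - t) + (1 - 1 / (1 - t)) * 2 by ring, Real.rpow_add hτ, hτr,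
      Real.rpow_mul hτ.le, Real.rpow_two]
    field_simp
  rw [hvar, Real.sqrt_sq (by positivity), htail]
  ring

section Markov

variable {ι : Type*} [Fintype ι] {w F G : ι → ℝ} {a b : ℝ}

lemma sum_filter_two_mul_lt_lt_half (hw : ∀ i, 0 ≤ w i) (hF : ∀ i, 0 ≤ F i)
    (ha : ∑ i, w i * F i ≤ a) : ∑ i ∈ univ.filter (fun i => 2 * a < F i), w i < 1 / 2 := by
  set S := univ.filter (fun i => 2 * a < F i)
  have hwF : ∑ i ∈ S, w i * F i ≤ a :=
    (sum_le_sum_of_subset_of_nonneg (subset_univ S) fun i _ _ => mul_nonneg (hw i) (hF i)).trans ha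
  have ha0 : 0 ≤ a := (sum_nonneg fun i _ => mul_nonneg (hw i) (hF i)).trans ha
  by_contra! hS
  obtain ⟨i, hiS, hwi⟩ : ∃ i ∈ S, 0 < w i := by
    by_contra! h
    linarith [sum_nonpos h]
  have : ∑ i ∈ S, w i * (2 * a) < ∑ i ∈ S, w i * F i :=
    sum_lt_sum (fun j hj => mul_le_mul_of_nonneg_left (mem_filter.1 hj).2.le (hw j))
      ⟨i, hiS, mul_lt_mul_of_pos_left (mem_filter.1 hiS).2 hwi⟩
  rw [← sum_mul] at this
  nlinarith

lemma exists_le_two_mul_and_le_two_mul (hw : ∀ i, 0 ≤ w i) (hw1 : ∑ i, w i = 1)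
    (hF : ∀ i, 0 ≤ F i) (hG : ∀ i, 0 ≤ G i) (ha : ∑ i, w i * F i ≤ a)
    (hb : ∑ i, w i * G i ≤ b) : ∃ i, F i ≤ 2 * a ∧ G i ≤ 2 * b := by
  by_contra! h
  have hgood : ∑ i ∈ univ.filter (fun i => ¬2 * a < F i), w i
      ≤ ∑ i ∈ univ.filter (fun i => 2 * b < G i), w i := by
    refine sum_le_sum_of_subset_of_nonneg (fun i hi => ?_) fun i _ _ => hw i
    simp only [mem_filter, mem_univ, true_and, not_lt] at hi ⊢
    exact h i hi
  have := sum_filter_add_sum_filter_not univ (fun i => 2 * a < F i) w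
  linarith [sum_filter_two_mul_lt_lt_half hw hF ha, sum_filter_two_mul_lt_lt_half hw hG hb]

end Markov

section RandomCodebook

variable {X Y K : Type*} [Fintype X] [Fintype Y] [Fintype K] [DecidableEq K] {p : X → ℝ}

def iidExpect (p : X → ℝ) (F : (K → X) → ℝ) : ℝ := ∑ c, (∏ k, p (c k)) * F c

lemma sum_prod_apply_eq_one (hp1 : ∑ x, p x = 1) : ∑ c : K → X, ∏ k, p (c k) = 1 := by
  classical
  rw [← Fintype.prod_sum (fun (_ : K) x => p x), hp1, prod_const_one]

lemma iidExpect_const (hp1 : ∑ x, p x = 1) (a : ℝ) : iidExpect (K := K) p (fun _ => a) = a := by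
  rw [iidExpect, ← sum_mul, sum_prod_apply_eq_one hp1, one_mul]

lemma iidExpect_add (F G : (K → X) → ℝ) :
    iidExpect p (fun c => F c + G c) = iidExpect p F + iidExpect p G := by
  simp only [iidExpect, mul_add, sum_add_distrib]

lemma iidExpect_mul_left (a : ℝ) (F : (K → X) → ℝ) :
    iidExpect p (fun c => a * F c) = a * iidExpect p F := by
  simp only [iidExpect, mul_sum, mul_left_comm]

lemma iidExpect_sum {ι : Type*} (s : Finset ι) (F : ι → (K → X) → ℝ) :
    iidExpect p (fun c => ∑ i ∈ s, F i c) = ∑ i ∈ s, iidExpect p (F i) := by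
  simp only [iidExpect, mul_sum]
  exact sum_comm

lemma iidExpect_mono (hp0 : ∀ x, 0 ≤ p x) {F G : (K → X) → ℝ} (h : ∀ c, F c ≤ G c) :
    iidExpect p F ≤ iidExpect p G :=
  sum_le_sum fun c _ => mul_le_mul_of_nonneg_left (h c) (prod_nonneg fun _ _ => hp0 _)

/-- Redrawing coordinate `j` of the codebook does not change the distribution: the map
`(c, x) ↦ (update c j x, c j)` is an involution preserving `(∏ k, p (c k)) * p x`. -/
lemma iidExpect_resample (hp1 : ∑ x, p x = 1) (j : K) (F : (K → X) → ℝ) :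
    iidExpect p (fun c => ∑ x, p x * F (Function.update c j x)) = iidExpect p F := by
  let e : Equiv.Perm ((K → X) × X) :=
    Function.Involutive.toPerm (fun q => (Function.update q.1 j q.2, q.1 j)) fun q => by simp
  have hweight : ∀ (c : K → X) (x : X),
      (∏ k, p (Function.update c j x k)) * p (c j) = (∏ k, p (c k)) * p x := by
    intro c x
    rw [Fintype.prod_eq_mul_prod_compl j, Fintype.prod_eq_mul_prod_compl j (fun k => p (c k))]
    simp only [Function.update_self]
    rw [prod_congr rfl fun k hk => by rw [Function.update_of_ne (by simpa using hk)]]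
    ring
  let h : (K → X) × X → ℝ := fun q => (∏ k, p (q.1 k)) * p q.2 * F q.1
  calc iidExpect p (fun c => ∑ x, p x * F (Function.update c j x))
      = ∑ q : (K → X) × X, h (e q) := by
        rw [Fintype.sum_prod_type]
        refine sum_congr rfl fun c _ => ?_
        rw [mul_sum]
        refine sum_congr rfl fun x _ => ?_
        rw [show e (c, x) = (Function.update c j x, c j) from rfl]
        simp only [h, hweight]
        ring
    _ = iidExpect p F := by
        rw [Equiv.sum_comp e h, Fintype.sum_prod_type]
        refine sum_congr rfl fun c _ => ?_
        simp only [h, ← sum_mul, ← mul_sum, hp1, mul_one]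

lemma iidExpect_apply_mul (hp1 : ∑ x, p x = 1) (j : K) (F : X → ℝ) {G : (K → X) → ℝ}
    (hG : ∀ c x, G (Function.update c j x) = G c) :
    iidExpect p (fun c => F (c j) * G c) = (∑ x, p x * F x) * iidExpect p G := by
  rw [← iidExpect_resample hp1 j, ← iidExpect_mul_left]
  simp only [Function.update_self, hG, ← mul_assoc, ← sum_mul]

lemma iidExpect_apply (hp1 : ∑ x, p x = 1) (j : K) (F : X → ℝ) :
    iidExpect p (fun c => F (c j)) = ∑ x, p x * F x := by
  simpa [iidExpect_const hp1] using iidExpect_apply_mul hp1 j F (G := fun _ => 1) fun _ _ => rfl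

lemma iidExpect_apply_mul_apply (hp1 : ∑ x, p x = 1) {j k : K} (hjk : j ≠ k) (F G : X → ℝ) :
    iidExpect p (fun c => F (c j) * G (c k)) = (∑ x, p x * F x) * ∑ x, p x * G x := by
  rw [iidExpect_apply_mul hp1 j F fun c x => by rw [Function.update_of_ne hjk.symm],
    iidExpect_apply hp1]

lemma iidExpect_rpow_le (hp0 : ∀ x, 0 ≤ p x) (hp1 : ∑ x, p x = 1) {F : (K → X) → ℝ}
    (hF : ∀ c, 0 ≤ F c) {t : ℝ} (ht0 : 0 ≤ t) (ht1 : t ≤ 1) :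
    iidExpect p (fun c => F c ^ t) ≤ iidExpect p F ^ t := by
  simpa only [iidExpect, smul_eq_mul] using (Real.concaveOn_rpow ht0 ht1).le_map_sum
    (fun c _ => prod_nonneg fun _ _ => hp0 _) (sum_prod_apply_eq_one hp1)
    fun c _ => Set.mem_Ici.2 (hF c)

lemma iidExpect_abs_le_sqrt (hp0 : ∀ x, 0 ≤ p x) (hp1 : ∑ x, p x = 1) (F : (K → X) → ℝ) :
    iidExpect p (fun c => |F c|) ≤ √(iidExpect p fun c => F c ^ 2) := by
  refine (le_abs_self _).trans (Real.abs_le_sqrt ?_)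
  simpa only [iidExpect, smul_eq_mul, sq_abs] using (convexOn_pow 2).map_sum_le
    (fun c _ => prod_nonneg fun _ _ => hp0 _) (sum_prod_apply_eq_one hp1)
    fun c _ => Set.mem_Ici.2 (abs_nonneg (F c))

lemma iidExpect_mul_rpow_sum_erase_le (hp0 : ∀ x, 0 ≤ p x) (hp1 : ∑ x, p x = 1) {F : X → ℝ}
    (hF : ∀ x, 0 ≤ F x) (k : K) {t : ℝ} (ht0 : 0 ≤ t) (ht1 : t ≤ 1) :
    iidExpect p (fun c => F (c k) * (∑ k' ∈ univ.erase k, F (c k')) ^ t)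
      ≤ (Fintype.card K : ℝ) ^ t * (∑ x, p x * F x) ^ (1 + t) := by
  have hμ : 0 ≤ ∑ x, p x * F x := sum_nonneg fun x _ => mul_nonneg (hp0 x) (hF x)
  rw [iidExpect_apply_mul hp1 k F fun c x => by
    congr 1
    exact sum_congr rfl fun k' hk' => by rw [Function.update_of_ne (ne_of_mem_erase hk')]]
  calc (∑ x, p x * F x) * iidExpect p (fun c => (∑ k' ∈ univ.erase k, F (c k')) ^ t)
      ≤ (∑ x, p x * F x) * iidExpect p (fun c => ∑ k' ∈ univ.erase k, F (c k')) ^ t :=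
        mul_le_mul_of_nonneg_left (iidExpect_rpow_le hp0 hp1
          (fun c => sum_nonneg fun _ _ => hF _) ht0 ht1) hμ
    _ = (∑ x, p x * F x) * (#(univ.erase k) * ∑ x, p x * F x) ^ t := by
        rw [iidExpect_sum, sum_congr rfl fun k' _ => iidExpect_apply hp1 k' F, sum_const,
          nsmul_eq_mul]
    _ ≤ (∑ x, p x * F x) * (Fintype.card K * ∑ x, p x * F x) ^ t := by
        gcongr
        exact_mod_cast card_erase_le
    _ = (Fintype.card K : ℝ) ^ t * (∑ x, p x * F x) ^ (1 + t) := by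
        rw [Real.mul_rpow (Nat.cast_nonneg _) hμ, Real.rpow_add' hμ (by linarith), Real.rpow_one]
        ring

lemma iidExpect_sum_mlError_le (hp0 : ∀ x, 0 ≤ p x) (hp1 : ∑ x, p x = 1) {W : X → Y → ℝ}
    (hW : ∀ x y, 0 ≤ W x y) {dec : (K → X) → Y → K}
    (hdec : ∀ (c : K → X) y k, W (c k) y ≤ W (c (dec c y)) y) {t : ℝ} (ht0 : 0 ≤ t) (ht1 : t ≤ 1) :
    iidExpect p (fun c => ∑ k, ∑ y ∈ univ.filter (fun y => dec c y ≠ k), W (c k) y)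
      ≤ Fintype.card K *
          ((Fintype.card K : ℝ) ^ t * ∑ y, (∑ x, p x * W x y ^ (1 / (1 + t))) ^ (1 + t)) := by
  set s := 1 / (1 + t)
  have hpoint : ∀ c k, ∑ y ∈ univ.filter (fun y => dec c y ≠ k), W (c k) y
      ≤ ∑ y, W (c k) y ^ s * (∑ k' ∈ univ.erase k, W (c k') y ^ s) ^ t := by
    intro c k
    refine (sum_le_sum fun y hy => le_rpow_inv_one_add_mul_rpow (hW _ _) (hdec c y k) ht0
      (single_le_sum (f := fun k' => W (c k') y ^ s) (fun _ _ => Real.rpow_nonneg (hW _ _) _)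
        (mem_erase.2 ⟨(mem_filter.1 hy).2, mem_univ _⟩))).trans
      (sum_le_sum_of_subset_of_nonneg (subset_univ _) fun y _ _ => ?_)
    exact mul_nonneg (Real.rpow_nonneg (hW _ _) _)
      (Real.rpow_nonneg (sum_nonneg fun _ _ => Real.rpow_nonneg (hW _ _) _) _)
  calc _ ≤ iidExpect p (fun c => ∑ k, ∑ y,
          W (c k) y ^ s * (∑ k' ∈ univ.erase k, W (c k') y ^ s) ^ t) :=
        iidExpect_mono hp0 fun c => sum_le_sum fun k _ => hpoint c k
    _ ≤ ∑ _k : K, ∑ y, (Fintype.card K : ℝ) ^ t * (∑ x, p x * W x y ^ s) ^ (1 + t) := by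
        simp only [iidExpect_sum]
        exact sum_le_sum fun k _ => sum_le_sum fun y _ => iidExpect_mul_rpow_sum_erase_le hp0 hp1
          (F := fun x => W x y ^ s) (fun x => Real.rpow_nonneg (hW x y) _) k ht0 ht1
    _ = _ := by simp only [sum_const, card_univ, nsmul_eq_mul, ← mul_sum]

lemma iidExpect_sq_sum_eq (hp1 : ∑ x, p x = 1) (γ : K → ℝ) (F : X → ℝ) :
    iidExpect p (fun c => (∑ k, γ k * F (c k)) ^ 2)
      = (∑ k, γ k) ^ 2 * (∑ x, p x * F x) ^ 2
        + (∑ k, γ k ^ 2) * (∑ x, p x * F x ^ 2 - (∑ x, p x * F x) ^ 2) := by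
  set μ := ∑ x, p x * F x
  have hpair : ∀ k k' : K, iidExpect p (fun c => F (c k) * F (c k'))
      = μ ^ 2 + if k = k' then ∑ x, p x * F x ^ 2 - μ ^ 2 else 0 := by
    intro k k'
    by_cases hkk' : k = k'
    · subst hkk'
      simp only [if_true, add_sub_cancel, ← sq]
      exact iidExpect_apply hp1 k (fun x => F x ^ 2)
    · rw [iidExpect_apply_mul_apply hp1 hkk', if_neg hkk', sq, add_zero]
  calc iidExpect p (fun c => (∑ k, γ k * F (c k)) ^ 2)
      = iidExpect p (fun c => ∑ k, ∑ k', γ k * γ k' * (F (c k) * F (c k'))) := by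
        congr 1 with c
        rw [sq, sum_mul_sum]
        exact sum_congr rfl fun k _ => sum_congr rfl fun k' _ => by ring
    _ = ∑ k, ∑ k', γ k * γ k' * (μ ^ 2 + if k = k' then ∑ x, p x * F x ^ 2 - μ ^ 2 else 0) := by
        simp only [iidExpect_sum, iidExpect_mul_left, hpair]
    _ = _ := by
        simp only [mul_add, sum_add_distrib, mul_ite, mul_zero, sum_ite_eq, mem_univ, if_true,
          ← sum_mul, ← mul_sum, ← sq]

/-- Splitting `V` at height `τ`: the truncated part is controlled through its variance
(which only sees `∑ k, γ k ^ 2` because `∑ k, γ k = 0`), the tail through its mean. -/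
lemma iidExpect_abs_sum_le_of_truncation (hp0 : ∀ x, 0 ≤ p x) (hp1 : ∑ x, p x = 1)
    {γ : K → ℝ} (hγ : ∑ k, γ k = 0) {V : X → ℝ} (hV : ∀ x, 0 ≤ V x) {τ r : ℝ} (hτ : 0 < τ)
    (hr1 : 1 ≤ r) (hr2 : r ≤ 2) :
    iidExpect p (fun c => |∑ k, γ k * V (c k)|)
      ≤ √((∑ k, γ k ^ 2) * (τ ^ (2 - r) * ∑ x, p x * V x ^ r))
        + (∑ k, |γ k|) * (τ ^ (1 - r) * ∑ x, p x * V x ^ r) := by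
  set Vt : X → ℝ := fun x => if V x ≤ τ then V x else 0
  set Vh : X → ℝ := fun x => if V x ≤ τ then 0 else V x
  have hVh : ∀ x, 0 ≤ Vh x := fun x => by
    simp only [Vh]
    split_ifs
    exacts [le_rfl, hV x]
  have hsplit : ∀ c : K → X,
      |∑ k, γ k * V (c k)| ≤ |∑ k, γ k * Vt (c k)| + ∑ k, |γ k| * Vh (c k) := by
    intro c
    have hV_eq : ∑ k, γ k * V (c k) = ∑ k, γ k * Vt (c k) + ∑ k, γ k * Vh (c k) := by
      rw [← sum_add_distrib]
      refine sum_congr rfl fun k _ => ?_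
      simp only [Vt, Vh]
      split_ifs <;> ring
    rw [hV_eq]
    refine (abs_add_le _ _).trans (add_le_add_right ((abs_sum_le_sum_abs _ _).trans_eq ?_) _)
    simp only [abs_mul, abs_of_nonneg (hVh _)]
  have htrunc : ∑ x, p x * Vt x ^ 2 ≤ τ ^ (2 - r) * ∑ x, p x * V x ^ r := by
    rw [mul_sum]
    refine sum_le_sum fun x _ => ?_
    simp only [Vt]
    split_ifs with h
    · nlinarith [mul_le_mul_of_nonneg_left (sq_le_rpow_two_sub_mul_rpow (hV x) h hr2) (hp0 x)]
    · simpa using mul_nonneg (Real.rpow_nonneg hτ.le _)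
        (mul_nonneg (hp0 x) (Real.rpow_nonneg (hV x) _))
  have htail : ∑ x, p x * Vh x ≤ τ ^ (1 - r) * ∑ x, p x * V x ^ r := by
    rw [mul_sum]
    refine sum_le_sum fun x _ => ?_
    simp only [Vh]
    split_ifs with h
    · simpa using mul_nonneg (Real.rpow_nonneg hτ.le _)
        (mul_nonneg (hp0 x) (Real.rpow_nonneg (hV x) _))
    · nlinarith [mul_le_mul_of_nonneg_left (le_rpow_one_sub_mul_rpow hτ (not_le.1 h) hr1) (hp0 x)]
  have hvar : iidExpect p (fun c => (∑ k, γ k * Vt (c k)) ^ 2)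
      ≤ (∑ k, γ k ^ 2) * (τ ^ (2 - r) * ∑ x, p x * V x ^ r) := by
    rw [iidExpect_sq_sum_eq hp1, hγ]
    have : 0 ≤ ∑ k, γ k ^ 2 := sum_nonneg fun k _ => sq_nonneg _
    nlinarith [sq_nonneg (∑ x, p x * Vt x)]
  calc iidExpect p (fun c => |∑ k, γ k * V (c k)|)
      ≤ iidExpect p (fun c => |∑ k, γ k * Vt (c k)| + ∑ k, |γ k| * Vh (c k)) :=
        iidExpect_mono hp0 hsplit
    _ = iidExpect p (fun c => |∑ k, γ k * Vt (c k)|) + (∑ k, |γ k|) * ∑ x, p x * Vh x := by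
        simp only [iidExpect_add, iidExpect_sum, iidExpect_mul_left, iidExpect_apply hp1, sum_mul]
    _ ≤ _ := add_le_add ((iidExpect_abs_le_sqrt hp0 hp1 _).trans (Real.sqrt_le_sqrt hvar))
        (mul_le_mul_of_nonneg_left htail (sum_nonneg fun k _ => abs_nonneg _))

lemma iidExpect_abs_sum_le (hp0 : ∀ x, 0 ≤ p x) (hp1 : ∑ x, p x = 1) {γ : K → ℝ}
    (hγ : ∑ k, γ k = 0) (hγ1 : ∑ k, |γ k| ≤ 2) {l : ℝ} (hl : 0 < l) (hγ2 : ∑ k, γ k ^ 2 ≤ l⁻¹)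
    {V : X → ℝ} (hV : ∀ x, 0 ≤ V x) {t : ℝ} (ht0 : 0 ≤ t) (ht : t ≤ 1 / 2) :
    iidExpect p (fun c => |∑ k, γ k * V (c k)|)
      ≤ 3 * ((∑ x, p x * V x ^ (1 / (1 - t))) ^ (1 - t) / l ^ t) := by
  have hr1 : 1 ≤ 1 / (1 - t) := by rw [le_div_iff₀ (by linarith)]; linarith
  have hr2 : 1 / (1 - t) ≤ 2 := by rw [div_le_iff₀ (by linarith)]; linarith
  set m := ∑ x, p x * V x ^ (1 / (1 - t))
  rcases (sum_nonneg fun x _ => mul_nonneg (hp0 x) (Real.rpow_nonneg (hV x) _) : 0 ≤ m).eq_or_lt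
    with hm | hm
  · have h := iidExpect_abs_sum_le_of_truncation hp0 hp1 hγ hV one_pos hr1 hr2
    rw [← hm] at h
    simp only [mul_zero, Real.sqrt_zero, add_zero] at h
    exact h.trans (by positivity)
  · refine (iidExpect_abs_sum_le_of_truncation hp0 hp1 hγ hV
      (τ := (m * l) ^ (1 - t)) (by positivity) hr1 hr2).trans ?_
    rw [← sqrt_add_two_mul_truncation_eq hm hl (by linarith)]
    gcongr

end RandomCodebook

noncomputable section BinnedCode

variable {X Y Z : Type*} [Fintype Y] {M L : ℕ}

-- `ε_B(Φ)` and `d₁(Φ|E)` for the code `Φ = (M, {Q i}, {D i})`.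
def avgErrorProb [Fintype X] [DecidableEq Y] (W : X → Y → ℝ) (Q : Fin M → X → ℝ)
    (D : Fin M → Finset Y) : ℝ :=
  (1 / (M : ℝ)) * ∑ i, ∑ x, Q i x * ∑ y ∈ (D i)ᶜ, W x y

def distinguishability [Fintype X] [Fintype Z] (W : X → Z → ℝ) (Q : Fin M → X → ℝ) : ℝ :=
  ∑ i : Fin M, ∑ z, |(1 / (M : ℝ)) * (∑ x, Q i x * W x z)
    - (1 / (M : ℝ)) * ((1 / (M : ℝ)) * ∑ j, ∑ x, Q j x * W x z)|

/-- The code of a codebook `c`: message `i` is encoded as a uniformly random codeword `c (i, l)`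
of its bin, and `y` is decoded to the bin of the codeword `dec c y` chosen by the decoder. -/
def binDist [DecidableEq X] (c : Fin M × Fin L → X) (i : Fin M) (x : X) : ℝ :=
  (L : ℝ)⁻¹ * ∑ l, if c (i, l) = x then 1 else 0

def decodingBins (dec : (Fin M × Fin L → X) → Y → Fin M × Fin L) (c : Fin M × Fin L → X)
    (i : Fin M) : Finset Y :=
  univ.filter fun y => (dec c y).1 = i

-- The coefficients `γ_ik` of the header.
def binCoeff (i : Fin M) (k : Fin M × Fin L) : ℝ :=
  (if k.1 = i then (L : ℝ)⁻¹ else 0) - ((M : ℝ) * L)⁻¹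

lemma sum_binDist_mul [Fintype X] [DecidableEq X] (c : Fin M × Fin L → X) (i : Fin M) (g : X → ℝ) :
    ∑ x, binDist c i x * g x = (L : ℝ)⁻¹ * ∑ l, g (c (i, l)) := by
  simp only [binDist, mul_assoc, ← mul_sum, sum_mul, ite_mul, one_mul, zero_mul]
  rw [sum_comm]
  simp only [sum_ite_eq, mem_univ, if_true]

lemma binDist_nonneg [DecidableEq X] (c : Fin M × Fin L → X) (i : Fin M) (x : X) :
    0 ≤ binDist c i x :=
  mul_nonneg (by positivity) (sum_nonneg fun _ _ => by split_ifs <;> norm_num)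

lemma sum_binDist [Fintype X] [DecidableEq X] (hL : 0 < L) (c : Fin M × Fin L → X) (i : Fin M) :
    ∑ x, binDist c i x = 1 := by
  simpa [hL.ne'] using sum_binDist_mul c i fun _ => 1

lemma decodingBins_disjoint (dec : (Fin M × Fin L → X) → Y → Fin M × Fin L)
    (c : Fin M × Fin L → X) {i j : Fin M} (hij : i ≠ j) :
    Disjoint (decodingBins dec c i) (decodingBins dec c j) :=
  disjoint_filter.2 fun _ _ hi hj => hij (hi.symm.trans hj)

lemma sum_ite_fst_eq (i : Fin M) (f : Fin M × Fin L → ℝ) :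
    ∑ k, (if k.1 = i then f k else 0) = ∑ l, f (i, l) := by
  rw [Fintype.sum_prod_type, sum_comm]
  simp

lemma sum_ite_fst_inv_eq_one (hL : 0 < L) (i : Fin M) :
    ∑ k : Fin M × Fin L, (if k.1 = i then (L : ℝ)⁻¹ else 0) = 1 := by
  simp [sum_ite_fst_eq i fun _ => (L : ℝ)⁻¹, hL.ne']

lemma sum_const_inv_mul_eq_one (hL : 0 < L) (i : Fin M) :
    ∑ _k : Fin M × Fin L, ((M : ℝ) * L)⁻¹ = 1 := by
  have hM : (M : ℝ) ≠ 0 := Nat.cast_ne_zero.2 (Fin.pos i).ne'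
  have hL' : (L : ℝ) ≠ 0 := Nat.cast_ne_zero.2 hL.ne'
  simp only [sum_const, card_univ, Fintype.card_prod, Fintype.card_fin, nsmul_eq_mul]
  push_cast
  field_simp

lemma sum_binCoeff_mul (i : Fin M) (f : Fin M × Fin L → ℝ) :
    ∑ k, binCoeff i k * f k = (L : ℝ)⁻¹ * ∑ l, f (i, l) - ((M : ℝ) * L)⁻¹ * ∑ k, f k := by
  simp only [binCoeff, sub_mul, sum_sub_distrib, ite_mul, zero_mul, ← mul_sum,
    sum_ite_fst_eq i fun k => (L : ℝ)⁻¹ * f k]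

lemma sum_binCoeff (hL : 0 < L) (i : Fin M) : ∑ k : Fin M × Fin L, binCoeff i k = 0 := by
  simp only [binCoeff, sum_sub_distrib, sum_ite_fst_inv_eq_one hL, sum_const_inv_mul_eq_one hL i,
    sub_self]

lemma sum_abs_binCoeff_le (hL : 0 < L) (i : Fin M) :
    ∑ k : Fin M × Fin L, |binCoeff i k| ≤ 2 := by
  calc ∑ k : Fin M × Fin L, |binCoeff i k|
      ≤ ∑ k : Fin M × Fin L, ((if k.1 = i then (L : ℝ)⁻¹ else 0) + ((M : ℝ) * L)⁻¹) := by
        refine sum_le_sum fun k _ => (abs_sub _ _).trans_eq ?_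
        rw [abs_of_nonneg (by split_ifs <;> positivity), abs_of_nonneg (by positivity)]
    _ = 2 := by
        rw [sum_add_distrib, sum_ite_fst_inv_eq_one hL, sum_const_inv_mul_eq_one hL i]
        norm_num

lemma sum_sq_binCoeff_le (hL : 0 < L) (i : Fin M) :
    ∑ k : Fin M × Fin L, binCoeff i k ^ 2 ≤ (L : ℝ)⁻¹ := by
  set b := ((M : ℝ) * L)⁻¹
  have hsq : ∀ k : Fin M × Fin L, binCoeff i k ^ 2
      = ((L : ℝ)⁻¹ - 2 * b) * (if k.1 = i then (L : ℝ)⁻¹ else 0) + b * b := by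
    intro k
    simp only [binCoeff, b]
    split_ifs <;> ring
  rw [sum_congr rfl fun k _ => hsq k, sum_add_distrib, ← mul_sum, ← sum_mul,
    sum_ite_fst_inv_eq_one hL, sum_const_inv_mul_eq_one hL i]
  have : 0 ≤ b := by positivity
  linarith

lemma distinguishability_nonneg [Fintype X] [Fintype Z] (W : X → Z → ℝ) (Q : Fin M → X → ℝ) :
    0 ≤ distinguishability W Q := by
  unfold distinguishability
  positivity

end BinnedCode

section RandomBinning

variable {X Y Z : Type*} [Fintype X] [DecidableEq X] [Fintype Y] [Fintype Z] {M L : ℕ}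
  {p : X → ℝ}

lemma avgErrorProb_nonneg [DecidableEq Y] {W : X → Y → ℝ} (hW : ∀ x y, 0 ≤ W x y)
    (c : Fin M × Fin L → X) (D : Fin M → Finset Y) : 0 ≤ avgErrorProb W (binDist c) D :=
  mul_nonneg (by positivity) (sum_nonneg fun i _ => sum_nonneg fun x _ =>
    mul_nonneg (binDist_nonneg c i x) (sum_nonneg fun y _ => hW x y))

lemma avgErrorProb_binDist_le [DecidableEq Y] {W : X → Y → ℝ} (hW : ∀ x y, 0 ≤ W x y)
    (dec : (Fin M × Fin L → X) → Y → Fin M × Fin L) (c : Fin M × Fin L → X) :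
    avgErrorProb W (binDist c) (decodingBins dec c)
      ≤ ((M : ℝ) * L)⁻¹ * ∑ k, ∑ y ∈ univ.filter (fun y => dec c y ≠ k), W (c k) y := by
  have hsub : ∀ k : Fin M × Fin L,
      (decodingBins dec c k.1)ᶜ ⊆ univ.filter (fun y => dec c y ≠ k) := by
    intro k y hy
    simp only [decodingBins, mem_compl, mem_filter, mem_univ, true_and] at hy ⊢
    rintro rfl
    exact hy rfl
  calc avgErrorProb W (binDist c) (decodingBins dec c)
      = ((M : ℝ) * L)⁻¹ * ∑ k : Fin M × Fin L, ∑ y ∈ (decodingBins dec c k.1)ᶜ, W (c k) y := by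
        simp only [avgErrorProb, sum_binDist_mul, ← mul_sum, Fintype.sum_prod_type, mul_inv,
          one_div, mul_assoc]
    _ ≤ _ := mul_le_mul_of_nonneg_left (sum_le_sum fun k _ =>
        sum_le_sum_of_subset_of_nonneg (hsub k) fun _ _ _ => hW _ _) (by positivity)

lemma distinguishability_binDist (W : X → Z → ℝ) (c : Fin M × Fin L → X) :
    distinguishability W (binDist c)
      = (M : ℝ)⁻¹ * ∑ i, ∑ z, |∑ k, binCoeff i k * W (c k) z| := by
  have hterm : ∀ i z, (1 / (M : ℝ)) * (∑ x, binDist c i x * W x z)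
      - (1 / (M : ℝ)) * ((1 / (M : ℝ)) * ∑ j, ∑ x, binDist c j x * W x z)
      = (M : ℝ)⁻¹ * ∑ k, binCoeff i k * W (c k) z := by
    intro i z
    rw [sum_binCoeff_mul]
    simp only [sum_binDist_mul, ← mul_sum, Fintype.sum_prod_type, mul_inv]
    ring
  simp only [distinguishability, hterm, abs_mul, abs_inv, Nat.abs_cast, ← mul_sum]

lemma iidExpect_avgErrorProb_le [DecidableEq Y] (hp0 : ∀ x, 0 ≤ p x) (hp1 : ∑ x, p x = 1)
    {W : X → Y → ℝ} (hW : ∀ x y, 0 ≤ W x y) {dec : (Fin M × Fin L → X) → Y → Fin M × Fin L}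
    (hdec : ∀ (c : Fin M × Fin L → X) y k, W (c k) y ≤ W (c (dec c y)) y) (hM : 0 < M)
    (hL : 0 < L) {t : ℝ} (ht0 : 0 ≤ t) (ht1 : t ≤ 1) :
    iidExpect p (fun c => avgErrorProb W (binDist c) (decodingBins dec c))
      ≤ ((M : ℝ) * L) ^ t * ∑ y, (∑ x, p x * W x y ^ (1 / (1 + t))) ^ (1 + t) := by
  have hML : (0 : ℝ) < M * L := by positivity
  calc iidExpect p (fun c => avgErrorProb W (binDist c) (decodingBins dec c))
      ≤ ((M : ℝ) * L)⁻¹ * iidExpect p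
          (fun c => ∑ k, ∑ y ∈ univ.filter (fun y => dec c y ≠ k), W (c k) y) := by
        rw [← iidExpect_mul_left]
        exact iidExpect_mono hp0 fun c => avgErrorProb_binDist_le hW dec c
    _ ≤ ((M : ℝ) * L)⁻¹ * ((M * L : ℝ) * (((M : ℝ) * L) ^ t
          * ∑ y, (∑ x, p x * W x y ^ (1 / (1 + t))) ^ (1 + t))) := by
        gcongr
        simpa using iidExpect_sum_mlError_le hp0 hp1 hW hdec ht0 ht1
    _ = _ := by field_simp

lemma iidExpect_distinguishability_le (hp0 : ∀ x, 0 ≤ p x) (hp1 : ∑ x, p x = 1)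
    {W : X → Z → ℝ} (hW : ∀ x z, 0 ≤ W x z) (hM : 0 < M) (hL : 0 < L) {t : ℝ} (ht0 : 0 ≤ t)
    (ht : t ≤ 1 / 2) :
    iidExpect p (fun c : Fin M × Fin L → X => distinguishability W (binDist c))
      ≤ 3 * ((∑ z, (∑ x, p x * W x z ^ (1 / (1 - t))) ^ (1 - t)) / (L : ℝ) ^ t) := by
  simp only [distinguishability_binDist, iidExpect_mul_left, iidExpect_sum]
  calc (M : ℝ)⁻¹ * ∑ i : Fin M, ∑ z,
        iidExpect p (fun c : Fin M × Fin L → X => |∑ k, binCoeff i k * W (c k) z|)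
      ≤ (M : ℝ)⁻¹ * ∑ _i : Fin M, ∑ z,
          3 * ((∑ x, p x * W x z ^ (1 / (1 - t))) ^ (1 - t) / (L : ℝ) ^ t) := by
        gcongr with i _ z
        exact iidExpect_abs_sum_le hp0 hp1 (sum_binCoeff hL i) (sum_abs_binCoeff_le hL i)
          (by positivity) (sum_sq_binCoeff_le hL i) (fun x => hW x z) ht0 ht
    _ = _ := by
        have : (M : ℝ) ≠ 0 := by positivity
        simp only [sum_const, card_univ, Fintype.card_fin, nsmul_eq_mul, ← mul_sum, ← sum_div]
        field_simp

end RandomBinning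

theorem stmt_17_general {X Y Z : Type*} [Fintype X] [Fintype Y] [Fintype Z] [DecidableEq Y]
    (WB : X → Y → ℝ) (hWB0 : ∀ x y, 0 ≤ WB x y)
    (WE : X → Z → ℝ) (hWE0 : ∀ x z, 0 ≤ WE x z)
    (L M : ℕ) (hL : 0 < L) (hM : 0 < M)
    (p : X → ℝ) (hp0 : ∀ x, 0 ≤ p x) (hp1 : ∑ x, p x = 1) :
    ∃ (Q : Fin M → X → ℝ) (D : Fin M → Finset Y),
      (∀ i x, 0 ≤ Q i x) ∧ (∀ i, ∑ x, Q i x = 1) ∧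
      (∀ i j, i ≠ j → Disjoint (D i) (D j)) ∧
      (1 / (M : ℝ)) * ∑ i, ∑ x, Q i x * ∑ y ∈ (D i)ᶜ, WB x y
        ≤ 2 * sInf ((fun t : ℝ => ((M : ℝ) * L) ^ t *
            ∑ y, (∑ x, p x * WB x y ^ (1 / (1 + t))) ^ (1 + t)) '' Set.Icc 0 1) ∧
      (∑ i : Fin M, ∑ z,
          |(1 / (M : ℝ)) * (∑ x, Q i x * WE x z)
            - (1 / (M : ℝ)) * ((1 / (M : ℝ)) * ∑ j, ∑ x, Q j x * WE x z)|)
        ≤ 6 * sInf ((fun t : ℝ =>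
            (∑ z, (∑ x, p x * WE x z ^ (1 / (1 - t))) ^ (1 - t)) / (L : ℝ) ^ t) ''
            Set.Icc 0 (1 / 2)) := by
  classical
  have : Nonempty (Fin M × Fin L) := ⟨(⟨0, hM⟩, ⟨0, hL⟩)⟩
  choose dec hdec using fun (c : Fin M × Fin L → X) (y : Y) => Finite.exists_max fun k => WB (c k) y
  have hBob : iidExpect p (fun c => avgErrorProb WB (binDist c) (decodingBins dec c))
      ≤ sInf ((fun t : ℝ => ((M : ℝ) * L) ^ t *
            ∑ y, (∑ x, p x * WB x y ^ (1 / (1 + t))) ^ (1 + t)) '' Set.Icc 0 1) :=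
    le_csInf ((Set.nonempty_Icc.2 zero_le_one).image _) (Set.forall_mem_image.2 fun t ht =>
      iidExpect_avgErrorProb_le hp0 hp1 hWB0 hdec hM hL ht.1 ht.2)
  have hEve : iidExpect p (fun c : Fin M × Fin L → X => distinguishability WE (binDist c))
      ≤ 3 * sInf ((fun t : ℝ => (∑ z, (∑ x, p x * WE x z ^ (1 / (1 - t))) ^ (1 - t)) / (L : ℝ) ^ t)
        '' Set.Icc 0 (1 / 2)) := by
    rw [← div_le_iff₀' three_pos]
    exact le_csInf ((Set.nonempty_Icc.2 (by norm_num)).image _) (Set.forall_mem_image.2 fun t ht =>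
      (div_le_iff₀' three_pos).2 (iidExpect_distinguishability_le hp0 hp1 hWE0 hM hL ht.1 ht.2))
  obtain ⟨c, hcB, hcE⟩ := exists_le_two_mul_and_le_two_mul (fun c => prod_nonneg fun _ _ => hp0 _)
    (sum_prod_apply_eq_one hp1) (fun c => avgErrorProb_nonneg hWB0 c (decodingBins dec c))
    (fun c => distinguishability_nonneg WE (binDist c)) hBob hEve
  exact ⟨binDist c, decodingBins dec c, binDist_nonneg c, sum_binDist hL c,
    fun i j => decodingBins_disjoint dec c, hcB, hcE.trans_eq (by ring)⟩

/-- **Wire-tap channel coding theorem with universal₂ hashing.** For finite sets `X`, `Y`,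
`Z`, a main channel `WB`, a wire-tapper's channel `WE`, positive integers `L`, `M` and a
distribution `p` on `X`, there is a code `Φ = (M, {Q_i}, {D_i})` with
`ε_B(Φ) ≤ 2 min_{0≤t≤1} (ML)^t e^{φ(-t|WB,p)}` and
`d₁(Φ|E) ≤ 6 min_{0≤t≤1/2} e^{φ(t|WE,p)} / L^t`. -/
theorem stmt_17 {X Y Z : Type*} [Fintype X] [Fintype Y] [Fintype Z] [DecidableEq Y]
    (WB : X → Y → ℝ) (hWB0 : ∀ x y, 0 ≤ WB x y) (hWB1 : ∀ x, ∑ y, WB x y = 1)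
    (WE : X → Z → ℝ) (hWE0 : ∀ x z, 0 ≤ WE x z) (hWE1 : ∀ x, ∑ z, WE x z = 1)
    (L M : ℕ) (hL : 0 < L) (hM : 0 < M)
    (p : X → ℝ) (hp0 : ∀ x, 0 ≤ p x) (hp1 : ∑ x, p x = 1) :
    ∃ (Q : Fin M → X → ℝ) (D : Fin M → Finset Y),
      (∀ i x, 0 ≤ Q i x) ∧ (∀ i, ∑ x, Q i x = 1) ∧
      (∀ i j, i ≠ j → Disjoint (D i) (D j)) ∧
      (1 / (M : ℝ)) * ∑ i, ∑ x, Q i x * ∑ y ∈ (D i)ᶜ, WB x y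
        ≤ 2 * sInf ((fun t : ℝ => ((M : ℝ) * L) ^ t *
            ∑ y, (∑ x, p x * WB x y ^ (1 / (1 + t))) ^ (1 + t)) '' Set.Icc 0 1) ∧
      (∑ i : Fin M, ∑ z,
          |(1 / (M : ℝ)) * (∑ x, Q i x * WE x z)
            - (1 / (M : ℝ)) * ((1 / (M : ℝ)) * ∑ j, ∑ x, Q j x * WE x z)|)
        ≤ 6 * sInf ((fun t : ℝ =>
            (∑ z, (∑ x, p x * WE x z ^ (1 / (1 - t))) ^ (1 - t)) / (L : ℝ) ^ t) ''
            Set.Icc 0 (1 / 2)) :=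
  stmt_17_general WB hWB0 WE hWE0 L M hL hM p hp0 hp1
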